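/- Let c ∈ ℂ with |c| = 1 and 0 < η < 1. If a positive integer n satisfies |c^n + c| ≤ η + 1 - (1 + η^n)^n, then the orbit of 0 under iteration of P_{n,c}(z) = z^n + c is bounded, with every iterate of any point z with |z| ≤ η having absolute value at most η^n + 1. -/

import Mathlib

/-!
Write `P w = w ^ n + c`. If `‖w‖ ≤ η` then `‖P w‖ ≤ η ^ n + 1`, and
`P (P w) = ((c + w ^ n) ^ n - c ^ n) + (c ^ n + c)`, where the first summand has norm at most
`(1 + η ^ n) ^ n - 1` by the binomial expansion. The hypothesis on `‖c ^ n + c‖` is exactly what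
makes `P ∘ P` map the disk of radius `η` into itself; odd iterates then lie in the disk of
radius `η ^ n + 1`.
-/

open Set Metric

theorem norm_add_pow_sub_pow_le {R : Type*} [NormedRing R] [NormOneClass R] (a b : R) (n : ℕ) :
    ‖(a + b) ^ n - a ^ n‖ ≤ (‖a‖ + ‖b‖) ^ n - ‖a‖ ^ n := by
  induction n with
  | zero => simp
  | succ n ih =>
    have hsplit : (a + b) ^ (n + 1) - a ^ (n + 1) = ((a + b) ^ n - a ^ n) * (a + b) + a ^ n * b := by
      simp only [pow_succ]; noncomm_ring
    calc ‖(a + b) ^ (n + 1) - a ^ (n + 1)‖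
        ≤ ‖(a + b) ^ n - a ^ n‖ * ‖a + b‖ + ‖a ^ n‖ * ‖b‖ := by
          rw [hsplit]
          exact (norm_add_le _ _).trans (add_le_add (norm_mul_le _ _) (norm_mul_le _ _))
      _ ≤ ((‖a‖ + ‖b‖) ^ n - ‖a‖ ^ n) * (‖a‖ + ‖b‖) + ‖a‖ ^ n * ‖b‖ := by
          gcongr
          · exact (norm_nonneg _).trans ih
          · exact norm_add_le _ _
          · exact norm_pow_le _ _
      _ = (‖a‖ + ‖b‖) ^ (n + 1) - ‖a‖ ^ (n + 1) := by ring

theorem Set.MapsTo.iterate_of_mapsTo_iterate_two {α : Type*} {f : α → α} {s t : Set α}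
    (hst : s ⊆ t) (hf : MapsTo f s t) (hf2 : MapsTo f^[2] s s) (k : ℕ) : MapsTo f^[k] s t := by
  obtain ⟨m, rfl | rfl⟩ := Nat.even_or_odd' k
  · rw [Function.iterate_mul]
    exact (hf2.iterate m).mono_right hst
  · rw [Function.iterate_succ', Function.iterate_mul]
    exact hf.comp (hf2.iterate m)

section UnimodularPower

variable {R : Type*} [NormedRing R] [NormOneClass R] {c : R} {η : ℝ} {n : ℕ}

theorem mapsTo_pow_add_closedBall (hc : ‖c‖ = 1) :
    MapsTo (fun w : R => w ^ n + c) (closedBall 0 η) (closedBall 0 (η ^ n + 1)) := by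
  intro w hw
  rw [mem_closedBall_zero_iff] at hw ⊢
  calc ‖w ^ n + c‖ ≤ ‖w‖ ^ n + 1 := hc ▸ (norm_add_le _ _).trans (by gcongr; exact norm_pow_le _ _)
    _ ≤ η ^ n + 1 := by gcongr

theorem mapsTo_iterate_two_pow_add_closedBall (hc : ‖c‖ = 1)
    (hineq : ‖c ^ n + c‖ ≤ η + 1 - (1 + η ^ n) ^ n) :
    MapsTo (fun w : R => w ^ n + c)^[2] (closedBall 0 η) (closedBall 0 η) := by
  intro w hw
  rw [mem_closedBall_zero_iff] at hw ⊢
  have hwn : ‖w ^ n‖ ≤ η ^ n := (norm_pow_le _ _).trans (by gcongr)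
  have hsplit : (fun w : R => w ^ n + c)^[2] w = ((c + w ^ n) ^ n - c ^ n) + (c ^ n + c) := by
    simp only [Function.iterate_succ, Function.iterate_zero, Function.comp_apply, id]
    noncomm_ring
  calc ‖(fun w : R => w ^ n + c)^[2] w‖
      ≤ ((1 + η ^ n) ^ n - 1) + (η + 1 - (1 + η ^ n) ^ n) := by
        rw [hsplit]
        refine (norm_add_le _ _).trans (add_le_add ?_ hineq)
        calc ‖(c + w ^ n) ^ n - c ^ n‖ ≤ (‖c‖ + ‖w ^ n‖) ^ n - ‖c‖ ^ n :=
              norm_add_pow_sub_pow_le _ _ _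
          _ ≤ (1 + η ^ n) ^ n - 1 := by rw [hc, one_pow]; gcongr
    _ = η := by ring

end UnimodularPower

theorem stmt_6_general (c : ℂ) (hc : ‖c‖ = 1) (η : ℝ) (h0 : 0 < η) (h1 : η < 1)
    (n : ℕ)
    (hineq : ‖c ^ n + c‖ ≤ η + 1 - (1 + η ^ n) ^ n) :
    (∀ z : ℂ, ‖z‖ ≤ η →
      ∀ k : ℕ, ‖(fun w : ℂ => w ^ n + c)^[k] z‖ ≤ η ^ n + 1) ∧
    (∀ k : ℕ, ‖(fun w : ℂ => w ^ n + c)^[k] 0‖ ≤ η ^ n + 1) := by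
  have hball : closedBall (0 : ℂ) η ⊆ closedBall 0 (η ^ n + 1) :=
    closedBall_subset_closedBall (by linarith [pow_pos h0 n])
  have horbit : ∀ k, MapsTo (fun w : ℂ => w ^ n + c)^[k] (closedBall 0 η)
      (closedBall 0 (η ^ n + 1)) :=
    MapsTo.iterate_of_mapsTo_iterate_two hball (mapsTo_pow_add_closedBall hc)
      (mapsTo_iterate_two_pow_add_closedBall hc hineq)
  have hbound : ∀ z : ℂ, ‖z‖ ≤ η → ∀ k : ℕ, ‖(fun w : ℂ => w ^ n + c)^[k] z‖ ≤ η ^ n + 1 :=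
    fun z hz k => mem_closedBall_zero_iff.mp (horbit k (mem_closedBall_zero_iff.mpr hz))
  exact ⟨hbound, fun k => hbound 0 (by simpa using h0.le) k⟩

theorem stmt_6 (c : ℂ) (hc : ‖c‖ = 1) (η : ℝ) (h0 : 0 < η) (h1 : η < 1)
    (n : ℕ) (hn : 0 < n)
    (hineq : ‖c ^ n + c‖ ≤ η + 1 - (1 + η ^ n) ^ n) :
    (∀ z : ℂ, ‖z‖ ≤ η →
      ∀ k : ℕ, ‖(fun w : ℂ => w ^ n + c)^[k] z‖ ≤ η ^ n + 1) ∧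
    (∀ k : ℕ, ‖(fun w : ℂ => w ^ n + c)^[k] 0‖ ≤ η ^ n + 1) :=
  stmt_6_general c hc η h0 h1 n hineq
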